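/- arXiv:1401.0295 — 2 statements merged into one kernel-verified Lean document; each statement's English description precedes it below -/
import Mathlib

section
/- Let d ∈ ℕ and define the taming map ψ : ℝ^d → ℝ^d by ψ(v) = v/(1 + ‖v‖²). Then ψ is twice Fréchet differentiable and for every v ∈ ℝ^d and every u ∈ ℝ^d with ‖u‖ ≤ 1 it holds that ‖ψ''(v)(u, u)‖ ≤ 14·min{1, ‖v‖}. -/
/-- The taming map `ψ(v) = v / (1 + ‖v‖²)` on `ℝ^d`. -/
noncomputable def tamingMap (d : ℕ) (v : EuclideanSpace ℝ (Fin d)) : EuclideanSpace ℝ (Fin d) :=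
  (1 + ‖v‖ ^ 2)⁻¹ • v

/-!
With `g = (1 + ‖v‖²)⁻¹`, differentiating `ψ'(w) u = g(w) u - 2 g(w)² ⟪w, u⟫ w` once more gives
`ψ''(v)(u, u) = -4 g² ⟪v, u⟫ u + (8 g³ ⟪v, u⟫² - 2 g² ‖u‖²) v`. By Cauchy–Schwarz its norm is at most
`(6 g t + 8 t³) ‖u‖² ≤ 8 t ‖u‖²`, where `t = g ‖v‖ ≤ min ‖v‖ (1/2)` because `2 ‖v‖ ≤ 1 + ‖v‖²`.
-/

open scoped RealInnerProductSpace

theorem div_one_add_sq_le_half (x : ℝ) : x / (1 + x ^ 2) ≤ 1 / 2 := by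
  rw [div_le_iff₀ (by positivity)]
  nlinarith [sq_nonneg (x - 1)]

theorem fderiv_fderiv_apply_eq_fderiv_apply {𝕜 E F : Type*} [NontriviallyNormedField 𝕜]
    [NormedAddCommGroup E] [NormedSpace 𝕜 E] [NormedAddCommGroup F] [NormedSpace 𝕜 F]
    {f : E → F} {v : E} (hf : DifferentiableAt 𝕜 (fderiv 𝕜 f) v) (u u' : E) :
    fderiv 𝕜 (fderiv 𝕜 f) v u u' = fderiv 𝕜 (fun w => fderiv 𝕜 f w u') v u := by
  rw [fderiv_clm_apply hf (differentiableAt_const u')]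
  simp only [fderiv_fun_const, Pi.zero_apply, ContinuousLinearMap.comp_zero, zero_add,
    ContinuousLinearMap.flip_apply]

section

variable {E : Type*} [NormedAddCommGroup E] [InnerProductSpace ℝ E]

theorem hasFDerivAt_inv_one_add_norm_sq (w : E) :
    HasFDerivAt (fun x : E => (1 + ‖x‖ ^ 2)⁻¹)
      ((-2 * (1 + ‖w‖ ^ 2)⁻¹ ^ 2) • innerSL ℝ w) w := by
  have hq : HasFDerivAt (fun x : E => 1 + ‖x‖ ^ 2) (2 • innerSL ℝ w) w :=
    (hasStrictFDerivAt_norm_sq w).hasFDerivAt.const_add 1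
  refine ((hasDerivAt_inv (by positivity)).comp_hasFDerivAt w hq).congr_fderiv ?_
  ext u
  simp only [smul_apply, coe_innerSL_apply, nsmul_eq_mul, smul_eq_mul, inv_pow]
  ring

theorem contDiff_inv_one_add_norm_sq_smul {n : WithTop ℕ∞} :
    ContDiff ℝ n (fun x : E => (1 + ‖x‖ ^ 2)⁻¹ • x) :=
  ((contDiff_const.add (contDiff_norm_sq ℝ)).inv fun _ => by positivity).smul contDiff_id

theorem fderiv_inv_one_add_norm_sq_smul_apply (w u : E) :
    fderiv ℝ (fun x : E => (1 + ‖x‖ ^ 2)⁻¹ • x) w u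
      = (1 + ‖w‖ ^ 2)⁻¹ • u - (2 * (1 + ‖w‖ ^ 2)⁻¹ ^ 2 * ⟪w, u⟫) • w := by
  have h : HasFDerivAt (fun x : E => (1 + ‖x‖ ^ 2)⁻¹ • x) _ w :=
    (hasFDerivAt_inv_one_add_norm_sq w).smul (hasFDerivAt_id w)
  rw [h.fderiv]
  simp only [add_apply, smul_apply, ContinuousLinearMap.id_apply,
    ContinuousLinearMap.smulRight_apply, coe_innerSL_apply, smul_eq_mul]
  module

theorem fderiv_fderiv_inv_one_add_norm_sq_smul_apply (v u : E) :
    fderiv ℝ (fderiv ℝ (fun x : E => (1 + ‖x‖ ^ 2)⁻¹ • x)) v u u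
      = (-4 * (1 + ‖v‖ ^ 2)⁻¹ ^ 2 * ⟪v, u⟫) • u
        + (8 * (1 + ‖v‖ ^ 2)⁻¹ ^ 3 * ⟪v, u⟫ ^ 2 - 2 * (1 + ‖v‖ ^ 2)⁻¹ ^ 2 * ‖u‖ ^ 2) • v := by
  have hg := hasFDerivAt_inv_one_add_norm_sq v
  have hψ'u : HasFDerivAt
      (fun w : E => (1 + ‖w‖ ^ 2)⁻¹ • u - (2 * (1 + ‖w‖ ^ 2)⁻¹ ^ 2 * ⟪w, u⟫) • w) _ v :=
    (hg.smul_const u).sub ((((hg.pow 2).const_mul 2).mul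
      ((hasFDerivAt_id v).inner ℝ (hasFDerivAt_const u v))).smul (hasFDerivAt_id v))
  have hC2 : ContDiff ℝ 2 (fun x : E => (1 + ‖x‖ ^ 2)⁻¹ • x) := contDiff_inv_one_add_norm_sq_smul
  rw [fderiv_fderiv_apply_eq_fderiv_apply
    ((hC2.fderiv_right (m := 1) le_rfl).differentiable one_ne_zero v)]
  simp only [fderiv_inv_one_add_norm_sq_smul_apply]
  rw [hψ'u.fderiv]
  simp only [Pi.mul_apply, id_eq]
  generalize (1 + ‖v‖ ^ 2)⁻¹ = g
  simp only [sub_apply, add_apply, smul_apply, ContinuousLinearMap.smulRight_apply,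
    ContinuousLinearMap.id_apply, ContinuousLinearMap.comp_apply, ContinuousLinearMap.prod_apply,
    zero_apply, fderivInnerCLM_apply, coe_innerSL_apply, inner_zero_right,
    real_inner_self_eq_norm_sq, smul_eq_mul, nsmul_eq_mul]
  module

theorem norm_fderiv_fderiv_inv_one_add_norm_sq_smul_apply_le (v u : E) :
    ‖fderiv ℝ (fderiv ℝ (fun x : E => (1 + ‖x‖ ^ 2)⁻¹ • x)) v u u‖
      ≤ 8 * (‖v‖ / (1 + ‖v‖ ^ 2)) * ‖u‖ ^ 2 := by
  rw [fderiv_fderiv_inv_one_add_norm_sq_smul_apply, div_eq_inv_mul]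
  set g := (1 + ‖v‖ ^ 2)⁻¹
  have hg0 : 0 ≤ g := by positivity
  have hg1 : g ≤ 1 := inv_le_one_of_one_le₀ (le_add_of_nonneg_right (sq_nonneg _))
  have ht0 : 0 ≤ g * ‖v‖ := by positivity
  have ht1 : g * ‖v‖ ≤ 1 / 2 := by rw [← div_eq_inv_mul]; exact div_one_add_sq_le_half _
  have hr : |⟪v, u⟫| ≤ ‖v‖ * ‖u‖ := abs_real_inner_le_norm v u
  have hr2 : ⟪v, u⟫ ^ 2 ≤ (‖v‖ * ‖u‖) ^ 2 := sq_le_sq' (abs_le.mp hr).1 (abs_le.mp hr).2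
  calc _ ≤ 4 * g ^ 2 * |⟪v, u⟫| * ‖u‖
          + (8 * g ^ 3 * ⟪v, u⟫ ^ 2 + 2 * g ^ 2 * ‖u‖ ^ 2) * ‖v‖ := by
        refine (norm_add_le _ _).trans ?_
        rw [norm_smul, norm_smul, Real.norm_eq_abs, Real.norm_eq_abs]
        gcongr
        · simp [abs_mul]
        · refine (abs_sub _ _).trans_eq ?_
          rw [abs_of_nonneg (by positivity), abs_of_nonneg (by positivity)]
    _ ≤ 4 * g ^ 2 * (‖v‖ * ‖u‖) * ‖u‖
          + (8 * g ^ 3 * (‖v‖ * ‖u‖) ^ 2 + 2 * g ^ 2 * ‖u‖ ^ 2) * ‖v‖ := by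
        gcongr
    _ = (6 * g * (g * ‖v‖) + 8 * (g * ‖v‖) ^ 3) * ‖u‖ ^ 2 := by ring
    _ ≤ (6 * (g * ‖v‖) + 2 * (g * ‖v‖)) * ‖u‖ ^ 2 := by
        have h6 : 6 * g * (g * ‖v‖) ≤ 6 * (g * ‖v‖) := by nlinarith
        have h8 : 8 * (g * ‖v‖) ^ 3 ≤ 2 * (g * ‖v‖) := by
          nlinarith [mul_le_mul ht1 ht1 ht0 (by norm_num), mul_nonneg ht0 ht0]
        gcongr ?_ * _
        linarith
    _ = 8 * (g * ‖v‖) * ‖u‖ ^ 2 := by ring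

end

/-- The taming map is twice Fréchet differentiable and its second derivative satisfies
`‖ψ''(v)(u, u)‖ ≤ 14 · min{1, ‖v‖}` for all `v` and all `u` with `‖u‖ ≤ 1`. -/
theorem tamingMap_second_fderiv_bound (d : ℕ) :
    (Differentiable ℝ (tamingMap d) ∧ Differentiable ℝ (fderiv ℝ (tamingMap d))) ∧
      ∀ v u : EuclideanSpace ℝ (Fin d), ‖u‖ ≤ 1 →
        ‖fderiv ℝ (fderiv ℝ (tamingMap d)) v u u‖ ≤ 14 * min 1 ‖v‖ := by
  have hψ : ContDiff ℝ 2 (tamingMap d) := contDiff_inv_one_add_norm_sq_smul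
  refine ⟨⟨hψ.differentiable two_ne_zero,
    (hψ.fderiv_right (m := 1) le_rfl).differentiable one_ne_zero⟩, fun v u hu => ?_⟩
  have hvn : ‖v‖ / (1 + ‖v‖ ^ 2) ≤ ‖v‖ :=
    div_le_self (norm_nonneg v) (le_add_of_nonneg_right (sq_nonneg _))
  have hvh : ‖v‖ / (1 + ‖v‖ ^ 2) ≤ 1 / 2 := div_one_add_sq_le_half _
  calc _ ≤ 8 * (‖v‖ / (1 + ‖v‖ ^ 2)) * ‖u‖ ^ 2 :=
        norm_fderiv_fderiv_inv_one_add_norm_sq_smul_apply_le v u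
    _ ≤ 8 * (‖v‖ / (1 + ‖v‖ ^ 2)) := by
        apply mul_le_of_le_one_right (by positivity)
        exact pow_le_one₀ (norm_nonneg u) hu
    _ ≤ 14 * min 1 ‖v‖ := by
        rw [mul_min_of_nonneg _ _ (by norm_num : (0 : ℝ) ≤ 14)]
        exact le_min (by linarith) (by linarith [norm_nonneg v])
end

section
/- Let d ∈ ℕ and define the taming map ψ : ℝ^d → ℝ^d by ψ(v) = v/(1 + ‖v‖²). Then for every z ∈ ℝ^d it holds that ‖ψ'(z) − Id_{ℝ^d}‖_{L(ℝ^d)} ≤ 3‖z‖²/(1 + ‖z‖²). -/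
/-!
By the quotient rule, `ψ'(z) = (1 + ‖z‖²)⁻¹ • Id - 2 (1 + ‖z‖²)⁻² ⟪z, ·⟫ z`, the second term having
rank one and norm `2‖z‖² / (1 + ‖z‖²)²`. With `a = ‖z‖²`, the triangle inequality for the operator
norm gives `‖ψ'(z) - Id‖ ≤ a / (1 + a) + 2a / (1 + a)² ≤ 3a / (1 + a)`.
-/

open ContinuousLinearMap

theorem div_one_add_add_two_mul_div_one_add_sq_le {a : ℝ} (ha : 0 ≤ a) :
    a / (1 + a) + 2 * a / (1 + a) ^ 2 ≤ 3 * a / (1 + a) := by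
  have hpos : 0 < 1 + a := by positivity
  rw [div_add_div _ _ hpos.ne' (by positivity), div_le_div_iff₀ (by positivity) hpos]
  nlinarith [mul_nonneg ha (mul_nonneg ha hpos.le)]

section InnerProductSpace

variable {E : Type*} [NormedAddCommGroup E] [InnerProductSpace ℝ E]

theorem hasFDerivAt_inv_one_add_norm_sq_smul (z : E) :
    HasFDerivAt (fun v : E => (1 + ‖v‖ ^ 2)⁻¹ • v)
      ((1 + ‖z‖ ^ 2)⁻¹ • ContinuousLinearMap.id ℝ E
        - (2 / (1 + ‖z‖ ^ 2) ^ 2) • (innerSL ℝ z).smulRight z) z := by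
  have hden : HasFDerivAt (fun v : E => 1 + ‖v‖ ^ 2) (2 • innerSL ℝ z) z := by
    simpa using ((hasFDerivAt_id z).norm_sq).const_add 1
  have hinv := (hasDerivAt_inv (by positivity : 1 + ‖z‖ ^ 2 ≠ 0)).comp_hasFDerivAt z hden
  refine (hinv.smul (hasFDerivAt_id z)).congr_fderiv ?_
  ext x
  simp only [Function.comp_apply, sub_apply, add_apply, smul_apply, id_apply, smulRight_apply,
    innerSL_apply_apply, id_eq]
  module

theorem norm_fderiv_inv_one_add_norm_sq_smul_sub_id_le (z : E) :
    ‖fderiv ℝ (fun v : E => (1 + ‖v‖ ^ 2)⁻¹ • v) z - ContinuousLinearMap.id ℝ E‖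
      ≤ 3 * ‖z‖ ^ 2 / (1 + ‖z‖ ^ 2) := by
  rw [(hasFDerivAt_inv_one_add_norm_sq_smul z).fderiv]
  set a := ‖z‖ ^ 2 with ha
  have hpos : 0 < 1 + a := by positivity
  have hscalar : (1 + a)⁻¹ - 1 = -(a / (1 + a)) := by field_simp; ring
  have hid : ‖((1 + a)⁻¹ - 1) • ContinuousLinearMap.id ℝ E‖ ≤ a / (1 + a) := by
    rw [norm_smul, hscalar, norm_neg, Real.norm_of_nonneg (by positivity)]
    exact mul_le_of_le_one_right (by positivity) norm_id_le
  have hrank_one : ‖(2 / (1 + a) ^ 2) • (innerSL ℝ z).smulRight z‖ = 2 * a / (1 + a) ^ 2 := by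
    rw [norm_smul, norm_smulRight_apply, innerSL_apply_norm, Real.norm_of_nonneg (by positivity),
      ha]
    ring
  calc _ = ‖((1 + a)⁻¹ - 1) • ContinuousLinearMap.id ℝ E
          - (2 / (1 + a) ^ 2) • (innerSL ℝ z).smulRight z‖ := by
        congr 1; rw [sub_smul, one_smul]; abel
    _ ≤ a / (1 + a) + 2 * a / (1 + a) ^ 2 := (norm_sub_le _ _).trans (by rw [hrank_one]; gcongr)
    _ ≤ 3 * a / (1 + a) := div_one_add_add_two_mul_div_one_add_sq_le (by positivity)

end InnerProductSpace

/-- `‖ψ'(z) − Id‖ ≤ 3‖z‖²/(1 + ‖z‖²)` for the taming map `ψ`. -/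
theorem tamingMap_fderiv_sub_id_norm_le_div (d : ℕ) (z : EuclideanSpace ℝ (Fin d)) :
    ‖fderiv ℝ (tamingMap d) z - ContinuousLinearMap.id ℝ (EuclideanSpace ℝ (Fin d))‖
      ≤ 3 * ‖z‖ ^ 2 / (1 + ‖z‖ ^ 2) := by
  exact norm_fderiv_inv_one_add_norm_sq_smul_sub_id_le z
end
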